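/- For x ∈ Z[ω] with Gauss complexity G(x) = |x|² + |x•|², exactly one of the following holds: G(x) = 0 and x = 0; or G(x) = 2 and x = ω^k for some integer k; or G(x) ≥ 3. -/

import Mathlib

/-!
Write `x = a + bω + cω² + dω³`, so that `x• = a + bω³ + cω⁶ + dω⁹`. Expanding
`x x̄ + x• x̄•`, the coefficient of a product of two coordinates is `ω^k + ω^{-k} + ω^{3k} + ω^{-3k}`,
the trace of `ω^k`, which is `1` for odd `k` and `-1` for even `k`. Hence `G(x)` is the integral
quadratic form `2(a² + b² + c² + d²) + (ab + bc + cd + da) - (ac + bd)`. This form is invariant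
under cyclic shifts of the coordinates and dominates `5a²/4`, so `G(x) ≤ 2` forces every
coordinate into `{-1, 0, 1}`; among these 81 vectors only `0` and the coordinates of the ten units
`±ωʲ` give `G ≤ 2`, the units with `G = 2`.
-/

noncomputable def om : ℂ := Complex.exp (Real.pi * Complex.I / 5)

def Zomega : Set ℂ := {z | ∃ a b c d : ℤ, z = a + b * om + c * om ^ 2 + d * om ^ 3}

open Complex ComplexConjugate

lemma om_pow_five : om ^ 5 = -1 := by
  rw [om, ← Complex.exp_nat_mul, ← Complex.exp_pi_mul_I]
  congr 1
  push_cast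
  ring

lemma om_pow_ten : om ^ 10 = 1 := by
  rw [show om ^ 10 = (om ^ 5) ^ 2 by ring, om_pow_five]
  norm_num

lemma om_im_pos : 0 < om.im := by
  rw [om, show Real.pi * I / 5 = (Real.pi / 5 : ℝ) * I by push_cast; ring,
    exp_ofReal_mul_I_im]
  exact Real.sin_pos_of_pos_of_lt_pi (by positivity) (by linarith [Real.pi_pos])

lemma om_pow_four : om ^ 4 = om ^ 3 - om ^ 2 + om - 1 := by
  have hne : om + 1 ≠ 0 := fun h ↦ om_im_pos.ne' (by simpa using congrArg im h)
  refine mul_left_cancel₀ hne ?_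
  linear_combination om_pow_five

lemma conj_om_pow {n : ℕ} (hn : n ≤ 10) : conj (om ^ n) = om ^ (10 - n) := by
  have conj_om : conj om = om⁻¹ := by
    rw [om, ← exp_conj, ← exp_neg, map_div₀, map_mul, conj_ofReal, conj_I, map_ofNat]
    ring_nf
  rw [map_pow, conj_om, inv_pow]
  exact inv_eq_of_mul_eq_one_right (by rw [← pow_add, Nat.add_sub_cancel' hn, om_pow_ten])

lemma om_trace_one : om + om ^ 3 + om ^ 7 + om ^ 9 = 1 := by
  linear_combination (om ^ 2 + om ^ 4) * om_pow_five - om_pow_four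

lemma om_trace_two : om ^ 2 + om ^ 4 + om ^ 6 + om ^ 8 = -1 := by
  linear_combination (om + om ^ 3) * om_pow_five + om_pow_four

def gaussForm {R : Type*} [CommRing R] (a b c d : R) : R :=
  2 * (a ^ 2 + b ^ 2 + c ^ 2 + d ^ 2) + (a * b + b * c + c * d + d * a) - (a * c + b * d)

@[simp, norm_cast]
lemma Int.cast_gaussForm {R : Type*} [CommRing R] (a b c d : ℤ) :
    ((gaussForm a b c d : ℤ) : R) = gaussForm (a : R) b c d := by
  unfold gaussForm
  push_cast
  ring

lemma gaussForm_rotate {R : Type*} [CommRing R] (a b c d : R) :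
    gaussForm a b c d = gaussForm b c d a := by
  unfold gaussForm
  ring

-- `2 G - 5a²/2 = (3a + 2b - 2c + 2d)²/6 + 5((b + c)² + (c + d)² + (b - d)²)/3`
lemma abs_le_one_of_gaussForm_le_two {a b c d : ℤ} (h : gaussForm a b c d ≤ 2) : |a| ≤ 1 := by
  unfold gaussForm at h
  exact (sq_le_one_iff_abs_le_one a).mp <| by
    nlinarith [sq_nonneg (3 * a + 2 * b - 2 * c + 2 * d), sq_nonneg (b + c), sq_nonneg (c + d),
      sq_nonneg (b - d)]

-- The coordinates of `±1, ±ω, ±ω², ±ω³` and `±ω⁴ = ∓(1 - ω + ω² - ω³)`.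
def IsUnitCoords (a b c d : ℤ) : Prop :=
  ((a = 1 ∨ a = -1) ∧ b = 0 ∧ c = 0 ∧ d = 0) ∨ (a = 0 ∧ (b = 1 ∨ b = -1) ∧ c = 0 ∧ d = 0) ∨
    (a = 0 ∧ b = 0 ∧ (c = 1 ∨ c = -1) ∧ d = 0) ∨ (a = 0 ∧ b = 0 ∧ c = 0 ∧ (d = 1 ∨ d = -1)) ∨
    ((a = 1 ∨ a = -1) ∧ b = -a ∧ c = a ∧ d = -a)

lemma gaussForm_le_two {a b c d : ℤ} (h : gaussForm a b c d ≤ 2) :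
    (a = 0 ∧ b = 0 ∧ c = 0 ∧ d = 0) ∨ (gaussForm a b c d = 2 ∧ IsUnitCoords a b c d) := by
  have h₁ : gaussForm b c d a ≤ 2 := gaussForm_rotate a b c d ▸ h
  have h₂ : gaussForm c d a b ≤ 2 := gaussForm_rotate b c d a ▸ h₁
  have h₃ : gaussForm d a b c ≤ 2 := gaussForm_rotate c d a b ▸ h₂
  obtain ⟨ha, ha'⟩ := abs_le.mp (abs_le_one_of_gaussForm_le_two h)
  obtain ⟨hb, hb'⟩ := abs_le.mp (abs_le_one_of_gaussForm_le_two h₁)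
  obtain ⟨hc, hc'⟩ := abs_le.mp (abs_le_one_of_gaussForm_le_two h₂)
  obtain ⟨hd, hd'⟩ := abs_le.mp (abs_le_one_of_gaussForm_le_two h₃)
  unfold gaussForm at h
  unfold gaussForm IsUnitCoords
  interval_cases a <;> interval_cases b <;> interval_cases c <;> interval_cases d <;> omega

lemma normSq_add_normSq_eq_gaussForm (a b c d : ℝ) :
    normSq (a + b * om + c * om ^ 2 + d * om ^ 3) +
        normSq (a + b * om ^ 3 + c * om ^ 6 + d * om ^ 9) = gaussForm a b c d := by
  have conj_om : conj om = om ^ 9 := by simpa using conj_om_pow (n := 1) (by norm_num)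
  simp only [← ofReal_inj, ofReal_add, ← mul_conj, map_add, map_mul, conj_ofReal, conj_om,
    conj_om_pow (n := 2) (by norm_num), conj_om_pow (n := 3) (by norm_num),
    conj_om_pow (n := 6) (by norm_num), conj_om_pow (n := 9) (by norm_num), Nat.reduceSub]
  unfold gaussForm
  push_cast
  linear_combination (2 * (b ^ 2 + c ^ 2 + d ^ 2) + (b * c + c * d) * (om + om ^ 3) +
      b * d * (om ^ 2 + om ^ 6)) * om_pow_ten +
    (a * b + b * c + c * d + d * a) * om_trace_one + (a * c + b * d) * om_trace_two

lemma add_mem_Zomega {x y : ℂ} (hx : x ∈ Zomega) (hy : y ∈ Zomega) : x + y ∈ Zomega := by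
  obtain ⟨a, b, c, d, rfl⟩ := hx
  obtain ⟨a', b', c', d', rfl⟩ := hy
  exact ⟨a + a', b + b', c + c', d + d', by push_cast; ring⟩

lemma intCast_mul_om_pow_mem_Zomega (n : ℤ) {j : ℕ} (hj : j ≤ 3) : n * om ^ j ∈ Zomega := by
  interval_cases j
  exacts [⟨n, 0, 0, 0, by simp⟩, ⟨0, n, 0, 0, by simp⟩, ⟨0, 0, n, 0, by simp⟩,
    ⟨0, 0, 0, n, by simp⟩]

lemma map_intCast_of_map_add {R A : Type*} [Ring R] [AddGroupWithOne A] {S : Set R}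
    (hS : ∀ n : ℤ, (n : R) ∈ S) {f : R → A} (hadd : ∀ x ∈ S, ∀ y ∈ S, f (x + y) = f x + f y)
    (h1 : f 1 = 1) (n : ℤ) : f n = n :=
  eq_intCast' (AddMonoidHom.mk' (fun m : ℤ ↦ f m) fun m k ↦ by simpa using hadd _ (hS m) _ (hS k))
    (by simpa using h1) n

section

variable {f : ℂ → ℂ}
  (hf : ∀ x ∈ Zomega, ∀ y ∈ Zomega, f (x + y) = f x + f y ∧ f (x * y) = f x * f y)
  (hom : f om = om ^ 3) (h1 : f 1 = 1)
include hf hom h1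

lemma map_om_pow {j : ℕ} (hj : j ≤ 3) : f (om ^ j) = om ^ (3 * j) := by
  induction j with
  | zero => simpa using h1
  | succ j ih =>
    have mem {i : ℕ} (hi : i ≤ 3) : om ^ i ∈ Zomega := by
      simpa using intCast_mul_om_pow_mem_Zomega 1 hi
    rw [pow_succ, (hf _ (mem (i := j) (by omega)) _ (by simpa using mem (i := 1) (by norm_num))).2,
      ih (by omega), hom]
    ring

lemma map_intCast_mul_om_pow (n : ℤ) {j : ℕ} (hj : j ≤ 3) :
    f (n * om ^ j) = n * om ^ (3 * j) := by
  have hS (m : ℤ) : (m : ℂ) ∈ Zomega := by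
    simpa using intCast_mul_om_pow_mem_Zomega m (j := 0) (by norm_num)
  rw [(hf _ (hS n) _ (by simpa using intCast_mul_om_pow_mem_Zomega 1 hj)).2,
    map_intCast_of_map_add hS (fun x hx y hy ↦ (hf x hx y hy).1) h1, map_om_pow hf hom h1 hj]

lemma map_Zomega (a b c d : ℤ) :
    f (a + b * om + c * om ^ 2 + d * om ^ 3) = a + b * om ^ 3 + c * om ^ 6 + d * om ^ 9 := by
  have add := fun x hx y hy ↦ (hf x hx y hy).1
  rw [show (a + b * om + c * om ^ 2 + d * om ^ 3 : ℂ) =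
      a * om ^ 0 + b * om ^ 1 + c * om ^ 2 + d * om ^ 3 by ring,
    add _ ?_ _ ?_, add _ ?_ _ ?_, add _ ?_ _ ?_]
  · simp only [map_intCast_mul_om_pow hf hom h1 _ (by norm_num : 0 ≤ 3),
      map_intCast_mul_om_pow hf hom h1 _ (by norm_num : 1 ≤ 3),
      map_intCast_mul_om_pow hf hom h1 _ (by norm_num : 2 ≤ 3),
      map_intCast_mul_om_pow hf hom h1 _ (by norm_num : 3 ≤ 3)]
    ring
  all_goals
    repeat' apply add_mem_Zomega
    all_goals exact intCast_mul_om_pow_mem_Zomega _ (by norm_num)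

end

lemma exists_zpow_eq_sign_mul_om_pow {ε : ℤ} (hε : ε = 1 ∨ ε = -1) (j : ℕ) :
    ∃ k : ℤ, (ε : ℂ) * om ^ j = om ^ k := by
  rcases hε with rfl | rfl
  · exact ⟨j, by simp⟩
  · exact ⟨(j + 5 : ℕ), by rw [zpow_natCast, pow_add, om_pow_five]; push_cast; ring⟩

lemma exists_zpow_eq_of_isUnitCoords {a b c d : ℤ} (h : IsUnitCoords a b c d) :
    ∃ k : ℤ, (a + b * om + c * om ^ 2 + d * om ^ 3 : ℂ) = om ^ k := by
  rcases h with ⟨ha, rfl, rfl, rfl⟩ | ⟨rfl, hb, rfl, rfl⟩ | ⟨rfl, rfl, hc, rfl⟩ |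
    ⟨rfl, rfl, rfl, hd⟩ | ⟨ha, hb, hc, hd⟩
  · obtain ⟨k, hk⟩ := exists_zpow_eq_sign_mul_om_pow ha 0
    exact ⟨k, by rw [← hk]; push_cast; ring⟩
  · obtain ⟨k, hk⟩ := exists_zpow_eq_sign_mul_om_pow hb 1
    exact ⟨k, by rw [← hk]; push_cast; ring⟩
  · obtain ⟨k, hk⟩ := exists_zpow_eq_sign_mul_om_pow hc 2
    exact ⟨k, by rw [← hk]; push_cast; ring⟩
  · obtain ⟨k, hk⟩ := exists_zpow_eq_sign_mul_om_pow hd 3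
    exact ⟨k, by rw [← hk]; push_cast; ring⟩
  · obtain ⟨k, hk⟩ := exists_zpow_eq_sign_mul_om_pow (ε := -a) (by omega) 4
    exact ⟨k, by rw [← hk, om_pow_four, hb, hc, hd]; push_cast; ring⟩

theorem stmt7 (f : ℂ → ℂ)
    (hom : f om = om ^ 3) (h1 : f 1 = 1)
    (hhom : ∀ x ∈ Zomega, ∀ y ∈ Zomega, f (x + y) = f x + f y ∧ f (x * y) = f x * f y)
    (x : ℂ) (hx : x ∈ Zomega) :
    (Complex.normSq x + Complex.normSq (f x) = 0 ∧ x = 0) ∨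
      (Complex.normSq x + Complex.normSq (f x) = 2 ∧ ∃ k : ℤ, x = om ^ k) ∨
      3 ≤ Complex.normSq x + Complex.normSq (f x) := by
  obtain ⟨a, b, c, d, rfl⟩ := hx
  have hG : normSq (a + b * om + c * om ^ 2 + d * om ^ 3) +
      normSq (f (a + b * om + c * om ^ 2 + d * om ^ 3)) = gaussForm a b c d := by
    rw [map_Zomega hhom hom h1]
    exact_mod_cast normSq_add_normSq_eq_gaussForm a b c d
  rw [hG]
  rcases le_or_gt (gaussForm a b c d) 2 with hle | hgt
  · rcases gaussForm_le_two hle with ⟨rfl, rfl, rfl, rfl⟩ | ⟨h2, hunit⟩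
    · left
      simp [gaussForm]
    · exact Or.inr (Or.inl ⟨by exact_mod_cast h2, exists_zpow_eq_of_isUnitCoords hunit⟩)
  · exact Or.inr (Or.inr (by exact_mod_cast hgt))
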